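/- arXiv:math/0201050 — 2 statements merged into one kernel-verified Lean document; each statement's English description precedes it below -/
import Mathlib

section
/- For any ε₀ ≤ ε in ℰ, the following identity holds in the field of fractions of S: Σ_{ε₀ ≤ ε' ≤ ε} (−1)^{l(ε')} · (∏_{i ∈ π₊(ε₀)} α_i(ε')) / (∏_{i ∈ π₊(ε)} α_i(ε')) = (−1)^{l(ε₀)} if ε = ε₀, and 0 if ε₀ < ε. -/
open scoped Classical

/-- The simple root `α_b`, as a vector in the span `B → ℚ` of the simple roots. -/
noncomputable def simpleRoot {B : Type} [DecidableEq B] (b : B) : B → ℚ := Pi.single b 1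

/-- The pairing `⟨x, α_b^∨⟩` determined by the Cartan matrix `Cmat` (so that
`⟨α_a, α_b^∨⟩ = Cmat a b`). -/
noncomputable def pairC {B : Type} [Fintype B] (Cmat : B → B → ℤ) (x : B → ℚ) (b : B) : ℚ :=
  ∑ a, x a * (Cmat a b : ℚ)

/-- The simple reflection `s_b : x ↦ x - ⟨x, α_b^∨⟩ α_b`. -/
noncomputable def srefl {B : Type} [Fintype B] [DecidableEq B] (Cmat : B → B → ℤ) (b : B)
    (x : B → ℚ) : B → ℚ :=
  x - pairC Cmat x b • simpleRoot b

/-- Apply a word `s_{b_1} s_{b_2} ⋯ s_{b_k}` of simple reflections to `x`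
(leftmost factor applied last). -/
noncomputable def applyWord {B : Type} [Fintype B] [DecidableEq B] (Cmat : B → B → ℤ)
    (w : List B) (x : B → ℚ) : B → ℚ :=
  w.foldr (fun b y => srefl Cmat b y) x

/-- The word `(μ_k)_{k ∈ π₊(ε), k < i}`, in increasing order of `k`. -/
def wordBelow {B : Type} {n : ℕ} (μ : Fin n → B) (ε : Fin n → Bool) (i : Fin n) : List B :=
  ((List.finRange n).filter (fun k => ε k && decide (k < i))).map μ

/-- The word `(μ_k)_{k ∈ π₊(ε)}`, in increasing order of `k`. -/
def wordOf {B : Type} {n : ℕ} (μ : Fin n → B) (ε : Fin n → Bool) : List B :=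
  ((List.finRange n).filter (fun k => ε k)).map μ

/-- `α_i(ε) = v_{i-1}(ε)(μ_i)`. -/
noncomputable def alphaE {B : Type} [Fintype B] [DecidableEq B] (Cmat : B → B → ℤ) {n : ℕ}
    (μ : Fin n → B) (ε : Fin n → Bool) (i : Fin n) : B → ℚ :=
  applyWord Cmat (wordBelow μ ε i) (simpleRoot (μ i))

/-- The order `ε ≤ ε'` on `ℰ = {0,1}^N`: containment of supports `π₊(ε) ⊆ π₊(ε')`. -/
def leE {n : ℕ} (ε ε' : Fin n → Bool) : Prop := ∀ k, ε k = true → ε' k = true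

/-- `l(ε) = card π₊(ε)`. -/
def lE {n : ℕ} (ε : Fin n → Bool) : ℕ := (Finset.univ.filter (fun k : Fin n => ε k = true)).card

/-- The linear embedding of the weight space into `S = Sym(𝔥^*) = ℚ[X_b : b ∈ B]`. -/
noncomputable def toS {B : Type} [Fintype B] (x : B → ℚ) : MvPolynomial B ℚ :=
  ∑ b, MvPolynomial.C (x b) * MvPolynomial.X b

/-- `σ_ε : ℰ → S`, `σ_ε(ε') = ∏_{i ∈ π₊(ε)} α_i(ε')` if `ε ≤ ε'`, and `0` otherwise. -/
noncomputable def sigE {B : Type} [Fintype B] [DecidableEq B] (Cmat : B → B → ℤ) {n : ℕ}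
    (μ : Fin n → B) (ε ε' : Fin n → Bool) : MvPolynomial B ℚ :=
  if leE ε ε' then ∏ i ∈ Finset.univ.filter (fun i : Fin n => ε i = true), toS (alphaE Cmat μ ε' i)
  else 0

/-- The indicator element `(i) ∈ ℰ`. -/
def indE {n : ℕ} (i : Fin n) : Fin n → Bool := fun k => decide (k = i)

/-- Addition in `ℰ = (ℤ/2)^N`. -/
def addE {n : ℕ} (ε η : Fin n → Bool) : Fin n → Bool := fun k => xor (ε k) (η k)

/-- A word is reduced if no shorter word of simple reflections represents the same
Weyl-group element. -/
def IsReducedWord {B : Type} [Fintype B] [DecidableEq B] (Cmat : B → B → ℤ) (w : List B) : Prop :=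
  ∀ w' : List B, applyWord Cmat w' = applyWord Cmat w → w.length ≤ w'.length

/-- `x` is a (real) root: the image of a simple root under a product of simple reflections. -/
def IsRoot {B : Type} [Fintype B] [DecidableEq B] (Cmat : B → B → ℤ) (x : B → ℚ) : Prop :=
  ∃ (w : List B) (b : B), x = applyWord Cmat w (simpleRoot b)

/-- `x` is a positive root. -/
def IsPos {B : Type} [Fintype B] [DecidableEq B] (Cmat : B → B → ℤ) (x : B → ℚ) : Prop :=
  IsRoot Cmat x ∧ ∀ b, 0 ≤ x b

/-- `x` is a negative root. -/
def IsNeg {B : Type} [Fintype B] [DecidableEq B] (Cmat : B → B → ℤ) (x : B → ℚ) : Prop :=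
  IsRoot Cmat x ∧ ∀ b, x b ≤ 0

/-- `Cmat` is a generalized Cartan matrix. -/
def IsGCM {B : Type} (Cmat : B → B → ℤ) : Prop :=
  (∀ b, Cmat b b = 2) ∧ (∀ a b, a ≠ b → Cmat a b ≤ 0) ∧ (∀ a b, Cmat a b = 0 → Cmat b a = 0)

section AuxLemmas

variable {B : Type} [Fintype B] [DecidableEq B] (Cmat : B → B → ℤ)

lemma pairC_sub_smul_simpleRoot (x : B → ℚ) (c : ℚ) (b : B) :
    pairC Cmat (x - c • simpleRoot b) b = pairC Cmat x b - c * (Cmat b b : ℚ) := by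
  unfold pairC simpleRoot
  simp only [Pi.sub_apply, Pi.smul_apply, Pi.single_apply, smul_eq_mul, sub_mul, mul_ite,
    mul_one, mul_zero, ite_mul, zero_mul, Finset.sum_sub_distrib, Finset.sum_ite_eq',
    Finset.mem_univ, if_pos]

lemma srefl_srefl (h2 : ∀ b, Cmat b b = 2) (b : B) (x : B → ℚ) :
    srefl Cmat b (srefl Cmat b x) = x := by
  unfold srefl
  rw [pairC_sub_smul_simpleRoot, h2 b]
  push_cast
  rw [show pairC Cmat x b - pairC Cmat x b * 2 = -(pairC Cmat x b) by ring]
  rw [neg_smul, sub_neg_eq_add, sub_add_cancel]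

lemma srefl_zero (b : B) : srefl Cmat b (0 : B → ℚ) = 0 := by
  unfold srefl pairC
  simp

lemma applyWord_cons (b : B) (w : List B) (x : B → ℚ) :
    applyWord Cmat (b :: w) x = srefl Cmat b (applyWord Cmat w x) := rfl

lemma applyWord_append (w w' : List B) (x : B → ℚ) :
    applyWord Cmat (w ++ w') x = applyWord Cmat w (applyWord Cmat w' x) := by
  unfold applyWord
  rw [List.foldr_append]

lemma applyWord_reverse_applyWord (h2 : ∀ b, Cmat b b = 2) (w : List B) (x : B → ℚ) :
    applyWord Cmat w.reverse (applyWord Cmat w x) = x := by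
  induction w generalizing x with
  | nil => rfl
  | cons b t ih =>
    rw [List.reverse_cons, applyWord_cons, applyWord_append]
    show applyWord Cmat t.reverse (applyWord Cmat [b] (srefl Cmat b (applyWord Cmat t x))) = x
    rw [show applyWord Cmat [b] (srefl Cmat b (applyWord Cmat t x))
        = srefl Cmat b (srefl Cmat b (applyWord Cmat t x)) from rfl,
      srefl_srefl Cmat h2, ih]

lemma applyWord_zero (w : List B) : applyWord Cmat w (0 : B → ℚ) = 0 := by
  induction w with
  | nil => rfl
  | cons b t ih => rw [applyWord_cons, ih, srefl_zero]

lemma alphaE_ne_zero (h2 : ∀ b, Cmat b b = 2) {n : ℕ} (μ : Fin n → B) (ε : Fin n → Bool)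
    (i : Fin n) : alphaE Cmat μ ε i ≠ 0 := by
  intro h
  have h1 := congrArg (applyWord Cmat (wordBelow μ ε i).reverse) h
  rw [show alphaE Cmat μ ε i = applyWord Cmat (wordBelow μ ε i) (simpleRoot (μ i)) from rfl,
    applyWord_reverse_applyWord Cmat h2, applyWord_zero] at h1
  have := congrFun h1 (μ i)
  simp [simpleRoot] at this

lemma toS_eq_zero_iff (x : B → ℚ) : toS x = 0 ↔ x = 0 := by
  constructor
  · intro h
    funext b
    have h1 := congrArg (MvPolynomial.eval (Pi.single b 1 : B → ℚ)) h
    simp only [toS, map_sum, map_mul, MvPolynomial.eval_C, MvPolynomial.eval_X, map_zero,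
      Pi.single_apply, mul_ite, mul_one, mul_zero, Finset.sum_ite_eq', Finset.mem_univ,
      if_pos] at h1
    simpa using h1
  · intro h
    simp [h, toS]

lemma alphaE_congr {n : ℕ} (μ : Fin n → B) {ε ε' : Fin n → Bool} (i : Fin n)
    (h : ∀ k, k < i → ε k = ε' k) : alphaE Cmat μ ε i = alphaE Cmat μ ε' i := by
  unfold alphaE wordBelow
  have hf : List.filter (fun k => ε k && decide (k < i)) (List.finRange n)
      = List.filter (fun k => ε' k && decide (k < i)) (List.finRange n) := by
    apply List.filter_congr
    intro k _
    by_cases hk : k < i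
    · rw [h k hk]
    · simp [hk]
  rw [hf]

end AuxLemmas

/-- for `ε₀ ≤ ε` in `ℰ`, in the fraction field of `S`:
`Σ_{ε₀ ≤ ε' ≤ ε} (−1)^{l(ε')} (∏_{i ∈ π₊(ε₀)} α_i(ε')) / (∏_{i ∈ π₊(ε)} α_i(ε'))`
equals `(−1)^{l(ε₀)}` if `ε = ε₀`, and `0` if `ε₀ < ε`. -/
theorem localization_sum_identity {B : Type} [Fintype B] [DecidableEq B]
    (Cmat : B → B → ℤ) (hgcm : IsGCM Cmat) {n : ℕ} (μ : Fin n → B)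
    (ε₀ ε : Fin n → Bool) (hle : leE ε₀ ε) :
    (∑ ε' : Fin n → Bool,
        if leE ε₀ ε' ∧ leE ε' ε then
          (-1 : FractionRing (MvPolynomial B ℚ)) ^ lE ε' *
            (algebraMap (MvPolynomial B ℚ) (FractionRing (MvPolynomial B ℚ))
              (∏ i ∈ Finset.univ.filter (fun i : Fin n => ε₀ i = true), toS (alphaE Cmat μ ε' i)) /
             algebraMap (MvPolynomial B ℚ) (FractionRing (MvPolynomial B ℚ))
              (∏ i ∈ Finset.univ.filter (fun i : Fin n => ε i = true), toS (alphaE Cmat μ ε' i)))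
        else 0) =
      if ε = ε₀ then (-1 : FractionRing (MvPolynomial B ℚ)) ^ lE ε₀ else 0 := by
  classical
  obtain ⟨h2, -, -⟩ := hgcm
  have hne0 : ∀ (η ε' : Fin n → Bool),
      (∏ i ∈ Finset.univ.filter (fun i : Fin n => η i = true), toS (alphaE Cmat μ ε' i)) ≠ 0 := by
    intro η ε'
    rw [Finset.prod_ne_zero_iff]
    intro i _
    rw [Ne, toS_eq_zero_iff]
    exact alphaE_ne_zero Cmat h2 μ ε' i
  have hφ : ∀ p : MvPolynomial B ℚ, p ≠ 0 →
      algebraMap (MvPolynomial B ℚ) (FractionRing (MvPolynomial B ℚ)) p ≠ 0 := by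
    intro p hp h
    exact hp ((map_eq_zero_iff _ (IsFractionRing.injective (MvPolynomial B ℚ)
      (FractionRing (MvPolynomial B ℚ)))).mp h)
  by_cases heq : ε = ε₀
  · subst heq
    rw [if_pos rfl]
    rw [Finset.sum_eq_single_of_mem ε (Finset.mem_univ ε)]
    · rw [if_pos ⟨hle, hle⟩, div_self (hφ _ (hne0 ε ε)), mul_one]
    · intro ε' _ hne
      rw [if_neg]
      rintro ⟨ha, hb⟩
      apply hne
      funext k
      have h1 := ha k
      have h2 := hb k
      cases hk : ε k <;> cases hk' : ε' k <;> simp_all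
  · rw [if_neg heq]
    have hex : ∃ k, ε k = true ∧ ε₀ k = false := by
      by_contra hc
      push_neg at hc
      apply heq
      funext k
      cases hk : ε₀ k with
      | true => rw [hle k hk]
      | false =>
        cases hk' : ε k with
        | false => rfl
        | true => exact absurd hk (hc k hk')
    set D : Finset (Fin n) := Finset.univ.filter (fun k => ε k = true ∧ ε₀ k = false) with hD
    have hDne : D.Nonempty := by
      obtain ⟨k, hk1, hk2⟩ := hex
      exact ⟨k, by simp [hD, hk1, hk2]⟩
    set j := D.max' hDne with hjdef
    have hjD : j ∈ D := D.max'_mem hDne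
    have hεj : ε j = true := (Finset.mem_filter.mp hjD).2.1
    have hε₀j : ε₀ j = false := (Finset.mem_filter.mp hjD).2.2
    have hjmax : ∀ k, ε k = true → ε₀ k = false → k ≤ j := by
      intro k h1 h0
      exact D.le_max' k (by simp [hD, h1, h0])
    have hagree : ∀ i : Fin n, ¬ i ≤ j → (ε₀ i = true ↔ ε i = true) := by
      intro i hi
      constructor
      · exact hle i
      · intro h
        cases h0 : ε₀ i with
        | true => rfl
        | false => exact absurd (hjmax i h h0) hi
    set g : (Fin n → Bool) → (Fin n → Bool) := fun η k => xor (η k) (decide (k = j)) with hg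
    have hg_apply_ne : ∀ (η : Fin n → Bool) (k : Fin n), k ≠ j → g η k = η k := by
      intro η k hk
      simp [hg, hk]
    have hg_apply_j : ∀ (η : Fin n → Bool), g η j = !η j := by
      intro η
      simp [hg]
    have hgg : ∀ η, g (g η) = η := by
      intro η
      funext k
      simp [hg, Bool.xor_assoc]
    have hgne : ∀ η, g η ≠ η := by
      intro η h
      have h1 := congrFun h j
      rw [hg_apply_j] at h1
      cases hb : η j <;> rw [hb] at h1 <;> simp at h1
    have hcondg : ∀ η, leE ε₀ η → leE η ε → leE ε₀ (g η) ∧ leE (g η) ε := by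
      intro η ha hb
      constructor
      · intro k hk
        have hkj : k ≠ j := by
          rintro rfl
          rw [hε₀j] at hk
          exact Bool.false_ne_true hk
        rw [hg_apply_ne η k hkj]
        exact ha k hk
      · intro k hk
        by_cases hkj : k = j
        · rw [hkj]; exact hεj
        · rw [hg_apply_ne η k hkj] at hk
          exact hb k hk
    have hpow : ∀ η : Fin n → Bool,
        (-1 : FractionRing (MvPolynomial B ℚ)) ^ lE (g η) = -(-1 : FractionRing (MvPolynomial B ℚ)) ^ lE η := by
      intro η
      cases hb : η j with
      | false =>
        have hset : Finset.univ.filter (fun k : Fin n => g η k = true)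
            = insert j (Finset.univ.filter (fun k : Fin n => η k = true)) := by
          ext k
          by_cases hkj : k = j
          · subst hkj
            simp [hg_apply_j, hb]
          · simp [hg_apply_ne η k hkj, hkj]
        have hjnot : j ∉ Finset.univ.filter (fun k : Fin n => η k = true) := by simp [hb]
        rw [show lE (g η) = (Finset.univ.filter (fun k : Fin n => g η k = true)).card from rfl,
          hset, Finset.card_insert_of_notMem hjnot,
          show (Finset.univ.filter (fun k : Fin n => η k = true)).card = lE η from rfl, pow_succ]
        ring
      | true =>
        have hset : Finset.univ.filter (fun k : Fin n => η k = true)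
            = insert j (Finset.univ.filter (fun k : Fin n => g η k = true)) := by
          ext k
          by_cases hkj : k = j
          · subst hkj
            simp [hg_apply_j, hb]
          · simp [hg_apply_ne η k hkj, hkj]
        have hjnot : j ∉ Finset.univ.filter (fun k : Fin n => g η k = true) := by
          simp [hg_apply_j, hb]
        rw [show lE η = (Finset.univ.filter (fun k : Fin n => η k = true)).card from rfl,
          hset, Finset.card_insert_of_notMem hjnot,
          show (Finset.univ.filter (fun k : Fin n => g η k = true)).card = lE (g η) from rfl,
          pow_succ]
        ring
    have hratio : ∀ η : Fin n → Bool,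
        (∏ i ∈ Finset.univ.filter (fun i : Fin n => ε₀ i = true), toS (alphaE Cmat μ η i)) *
        (∏ i ∈ Finset.univ.filter (fun i : Fin n => ε i = true), toS (alphaE Cmat μ (g η) i)) =
        (∏ i ∈ Finset.univ.filter (fun i : Fin n => ε₀ i = true), toS (alphaE Cmat μ (g η) i)) *
        (∏ i ∈ Finset.univ.filter (fun i : Fin n => ε i = true), toS (alphaE Cmat μ η i)) := by
      intro η
      have halpha : ∀ i : Fin n, i ≤ j → alphaE Cmat μ η i = alphaE Cmat μ (g η) i := by
        intro i hij
        apply alphaE_congr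
        intro k hk
        have hkj : k ≠ j := by
          rintro rfl
          exact absurd (lt_of_lt_of_le hk hij) (lt_irrefl j)
        rw [hg_apply_ne η k hkj]
      have hsplit : ∀ (η' : Fin n → Bool) (c : Fin n → Bool),
          (∏ i ∈ Finset.univ.filter (fun i : Fin n => c i = true), toS (alphaE Cmat μ η' i))
          = (∏ i ∈ (Finset.univ.filter (fun i : Fin n => c i = true)).filter (fun i => i ≤ j),
              toS (alphaE Cmat μ η' i))
            * (∏ i ∈ (Finset.univ.filter (fun i : Fin n => c i = true)).filter (fun i => ¬ i ≤ j),
              toS (alphaE Cmat μ η' i)) := by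
        intro η' c
        rw [Finset.prod_filter_mul_prod_filter_not]
      have hTset : (Finset.univ.filter (fun i : Fin n => ε₀ i = true)).filter (fun i => ¬ i ≤ j)
          = (Finset.univ.filter (fun i : Fin n => ε i = true)).filter (fun i => ¬ i ≤ j) := by
        ext i
        simp only [Finset.mem_filter, Finset.mem_univ, true_and]
        constructor
        · rintro ⟨ha, hb⟩
          exact ⟨(hagree i hb).mp ha, hb⟩
        · rintro ⟨ha, hb⟩
          exact ⟨(hagree i hb).mpr ha, hb⟩
      have hPA : (∏ i ∈ (Finset.univ.filter (fun i : Fin n => ε₀ i = true)).filter (fun i => i ≤ j),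
            toS (alphaE Cmat μ η i))
          = ∏ i ∈ (Finset.univ.filter (fun i : Fin n => ε₀ i = true)).filter (fun i => i ≤ j),
            toS (alphaE Cmat μ (g η) i) :=
        Finset.prod_congr rfl (fun i hi => by rw [halpha i (Finset.mem_filter.mp hi).2])
      have hPC : (∏ i ∈ (Finset.univ.filter (fun i : Fin n => ε i = true)).filter (fun i => i ≤ j),
            toS (alphaE Cmat μ η i))
          = ∏ i ∈ (Finset.univ.filter (fun i : Fin n => ε i = true)).filter (fun i => i ≤ j),
            toS (alphaE Cmat μ (g η) i) :=
        Finset.prod_congr rfl (fun i hi => by rw [halpha i (Finset.mem_filter.mp hi).2])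
      rw [hsplit η ε₀, hsplit η ε, hsplit (g η) ε₀, hsplit (g η) ε, hTset, hPA, hPC]
      ring
    apply Finset.sum_ninvolution g
    · intro η
      by_cases hc : leE ε₀ η ∧ leE η ε
      · have hc' : leE ε₀ (g η) ∧ leE (g η) ε := hcondg η hc.1 hc.2
        rw [if_pos hc, if_pos hc', hpow η]
        have hdiv :
            (algebraMap (MvPolynomial B ℚ) (FractionRing (MvPolynomial B ℚ))
              (∏ i ∈ Finset.univ.filter (fun i : Fin n => ε₀ i = true), toS (alphaE Cmat μ η i)) /
             algebraMap (MvPolynomial B ℚ) (FractionRing (MvPolynomial B ℚ))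
              (∏ i ∈ Finset.univ.filter (fun i : Fin n => ε i = true), toS (alphaE Cmat μ η i)))
            =
            (algebraMap (MvPolynomial B ℚ) (FractionRing (MvPolynomial B ℚ))
              (∏ i ∈ Finset.univ.filter (fun i : Fin n => ε₀ i = true), toS (alphaE Cmat μ (g η) i)) /
             algebraMap (MvPolynomial B ℚ) (FractionRing (MvPolynomial B ℚ))
              (∏ i ∈ Finset.univ.filter (fun i : Fin n => ε i = true), toS (alphaE Cmat μ (g η) i))) := by
          rw [div_eq_div_iff (hφ _ (hne0 ε η)) (hφ _ (hne0 ε (g η))), ← map_mul, ← map_mul,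
            hratio η]
        rw [hdiv]
        ring
      · have hc' : ¬ (leE ε₀ (g η) ∧ leE (g η) ε) := by
          intro h
          apply hc
          have h3 := hcondg (g η) h.1 h.2
          rw [hgg] at h3
          exact h3
        rw [if_neg hc, if_neg hc', add_zero]
    · intro η _
      exact hgne η
    · intro η
      exact Finset.mem_univ _
    · intro η
      exact hgg η
end

section
/- Fix ε₀ < ε in ℰ and let j be the largest element of π₊(ε) \ π₊(ε₀). Then the map ε' ↦ ε' + (j) is a fixed-point-free involution of the set {ε' : ε₀ ≤ ε' ≤ ε}, and it pairs each ε' with an element of opposite parity of l and with the same value of ∏_{i ∈ π₊(ε)\π₊(ε₀)} α_i; consequently Σ_{ε₀ ≤ ε' ≤ ε} (−1)^{l(ε')} / ∏_{i ∈ π₊(ε)\π₊(ε₀)} α_i(ε') = 0 in Frac(S). -/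
open scoped Classical

lemma addE_ne {n : ℕ} (ε' : Fin n → Bool) (j k : Fin n) (hk : k ≠ j) :
    addE ε' (indE j) k = ε' k := by simp [addE, indE, hk]

lemma addE_at {n : ℕ} (ε' : Fin n → Bool) (j : Fin n) :
    addE ε' (indE j) j = !ε' j := by simp [addE, indE]

lemma addE_invol {n : ℕ} (ε' : Fin n → Bool) (j : Fin n) :
    addE (addE ε' (indE j)) (indE j) = ε' := by
  funext k; simp [addE, Bool.xor_assoc]

lemma lE_addE_of_false {n : ℕ} (ε' : Fin n → Bool) (j : Fin n) (h : ε' j = false) :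
    lE (addE ε' (indE j)) = lE ε' + 1 := by
  unfold lE
  have hset : Finset.univ.filter (fun k => addE ε' (indE j) k = true) =
      insert j (Finset.univ.filter (fun k : Fin n => ε' k = true)) := by
    ext k
    by_cases hk : k = j
    · subst hk; simp [addE_at, h]
    · simp [addE_ne _ _ _ hk, hk]
  rw [hset, Finset.card_insert_of_notMem (by simp [h])]

lemma lE_addE_parity {n : ℕ} (ε' : Fin n → Bool) (j : Fin n) :
    lE (addE ε' (indE j)) % 2 ≠ lE ε' % 2 := by
  by_cases h : ε' j = false
  · rw [lE_addE_of_false ε' j h]; omega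
  · have h' : addE ε' (indE j) j = false := by
      rw [addE_at]; simp at h; simp [h]
    have := lE_addE_of_false (addE ε' (indE j)) j h'
    rw [addE_invol] at this
    omega

lemma alphaE_addE {B : Type} [Fintype B] [DecidableEq B] (Cmat : B → B → ℤ) {n : ℕ}
    (μ : Fin n → B) (ε' : Fin n → Bool) (j i : Fin n) (hij : i ≤ j) :
    alphaE Cmat μ (addE ε' (indE j)) i = alphaE Cmat μ ε' i := by
  unfold alphaE wordBelow
  have hfil : ((List.finRange n).filter (fun k => addE ε' (indE j) k && decide (k < i))) =
      ((List.finRange n).filter (fun k => ε' k && decide (k < i))) := by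
    apply List.filter_congr
    intro k _
    by_cases hk : k < i
    · have hkj : k ≠ j := fun hkj => absurd hij (not_le.mpr (hkj ▸ hk))
      rw [addE_ne _ _ _ hkj]
    · simp [hk]
  rw [hfil]

lemma neg_one_pow_of_mod_ne {K : Type*} [Monoid K] [HasDistribNeg K] {a b : ℕ}
    (h : a % 2 ≠ b % 2) : (-1 : K) ^ a = -(-1 : K) ^ b := by
  rcases Nat.even_or_odd b with hb | hb
  · have ha : Odd a := by
      rw [Nat.odd_iff]; rw [Nat.even_iff] at hb; omega
    rw [ha.neg_one_pow, hb.neg_one_pow]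
  · have ha : Even a := by
      rw [Nat.even_iff]; rw [Nat.odd_iff] at hb; omega
    rw [ha.neg_one_pow, hb.neg_one_pow, neg_neg]

/-- fix `ε₀ < ε` and let `j` be the largest element of `π₊(ε) \ π₊(ε₀)`.
Then `ε' ↦ ε' + (j)` is a fixed-point-free involution of the interval
`{ε' : ε₀ ≤ ε' ≤ ε}`, pairing each `ε'` with an element of the opposite parity of `l` and
the same value of `∏_{i ∈ π₊(ε)\π₊(ε₀)} α_i`; consequently
`Σ_{ε₀ ≤ ε' ≤ ε} (−1)^{l(ε')} / ∏_{i ∈ π₊(ε)\π₊(ε₀)} α_i(ε') = 0` in `Frac(S)`. -/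
theorem involution_sum_zero {B : Type} [Fintype B] [DecidableEq B]
    (Cmat : B → B → ℤ) (hgcm : IsGCM Cmat) {n : ℕ} (μ : Fin n → B)
    (ε₀ ε : Fin n → Bool) (hle : leE ε₀ ε) (hne : ε₀ ≠ ε) (j : Fin n)
    (hjε : ε j = true) (hjε₀ : ε₀ j = false)
    (hjmax : ∀ k, ε k = true → ε₀ k = false → k ≤ j) :
    (∀ ε', leE ε₀ ε' → leE ε' ε →
        leE ε₀ (addE ε' (indE j)) ∧ leE (addE ε' (indE j)) ε) ∧
    (∀ ε' : Fin n → Bool, addE (addE ε' (indE j)) (indE j) = ε') ∧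
    (∀ ε' : Fin n → Bool, addE ε' (indE j) ≠ ε') ∧
    (∀ ε' : Fin n → Bool, lE (addE ε' (indE j)) % 2 ≠ lE ε' % 2) ∧
    (∀ ε', leE ε₀ ε' → leE ε' ε →
        (∏ i ∈ Finset.univ.filter (fun i : Fin n => ε i = true ∧ ε₀ i = false),
          toS (alphaE Cmat μ (addE ε' (indE j)) i)) =
        ∏ i ∈ Finset.univ.filter (fun i : Fin n => ε i = true ∧ ε₀ i = false),
          toS (alphaE Cmat μ ε' i)) ∧
    (∑ ε' : Fin n → Bool,
        if leE ε₀ ε' ∧ leE ε' ε then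
          (-1 : FractionRing (MvPolynomial B ℚ)) ^ lE ε' /
            algebraMap (MvPolynomial B ℚ) (FractionRing (MvPolynomial B ℚ))
              (∏ i ∈ Finset.univ.filter (fun i : Fin n => ε i = true ∧ ε₀ i = false),
                toS (alphaE Cmat μ ε' i))
        else 0) = 0 := by
  have hmem : ∀ ε', leE ε₀ ε' → leE ε' ε →
      leE ε₀ (addE ε' (indE j)) ∧ leE (addE ε' (indE j)) ε := by
    intro ε' h1 h2
    constructor
    · intro k hk
      have hkj : k ≠ j := by
        rintro rfl; rw [hjε₀] at hk; exact Bool.false_ne_true hk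
      rw [addE_ne _ _ _ hkj]; exact h1 k hk
    · intro k hk
      by_cases hkj : k = j
      · subst hkj; exact hjε
      · rw [addE_ne _ _ _ hkj] at hk; exact h2 k hk
  have hfixfree : ∀ ε' : Fin n → Bool, addE ε' (indE j) ≠ ε' := by
    intro ε' h
    have := congrFun h j
    rw [addE_at] at this
    exact Bool.not_ne_self _ this
  have hprod : ∀ ε', leE ε₀ ε' → leE ε' ε →
      (∏ i ∈ Finset.univ.filter (fun i : Fin n => ε i = true ∧ ε₀ i = false),
        toS (alphaE Cmat μ (addE ε' (indE j)) i)) =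
      ∏ i ∈ Finset.univ.filter (fun i : Fin n => ε i = true ∧ ε₀ i = false),
        toS (alphaE Cmat μ ε' i) := by
    intro ε' _ _
    apply Finset.prod_congr rfl
    intro i hi
    simp only [Finset.mem_filter] at hi
    rw [alphaE_addE Cmat μ ε' j i (hjmax i hi.2.1 hi.2.2)]
  refine ⟨hmem, fun ε' => addE_invol ε' j, hfixfree, fun ε' => lE_addE_parity ε' j, hprod, ?_⟩
  apply Finset.sum_ninvolution (fun ε' => addE ε' (indE j))
  · intro ε'
    by_cases h : leE ε₀ ε' ∧ leE ε' ε
    · have h' := hmem ε' h.1 h.2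
      rw [if_pos h, if_pos h', hprod ε' h.1 h.2,
        neg_one_pow_of_mod_ne (lE_addE_parity ε' j)]
      ring
    · have h' : ¬ (leE ε₀ (addE ε' (indE j)) ∧ leE (addE ε' (indE j)) ε) := by
        intro hc
        have := hmem _ hc.1 hc.2
        rw [addE_invol] at this
        exact h this
      rw [if_neg h, if_neg h', add_zero]
  · intro ε' _; exact hfixfree ε'
  · intro ε'; exact Finset.mem_univ _
  · intro ε'; exact addE_invol ε' j
end
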